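/- Let H be a bipartite graph with parts A, B of size 8 and minimum degree at least 3, containing a set X ⊆ A with |X| = 5 and |N(X)| = 3 (an obstruction of type 1). Let H' be another bipartite graph on the same parts with minimum degree at least 3, obtained from H by adding one matching and removing one matching. If H' contains a matching of size 2 from X to B \ N_H(X), then H' has a perfect matching. -/
import Mathlib


/-- A set of pairs (edges of `K_{8,8}`, with first coordinate in part `A` and
second in part `B`) is a matching if no two of its edges share an endpoint. -/
def IsMatchingSet (M : Finset (Fin 8 × Fin 8)) : Prop :=
  ∀ p ∈ M, ∀ q ∈ M, (p.1 = q.1 ∨ p.2 = q.2) → p = q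

/-- The edge set of the bigraph encoded by the neighborhood function `N`. -/
def edgeFinset' (N : Fin 8 → Finset (Fin 8)) : Finset (Fin 8 × Fin 8) :=
  Finset.univ.filter (fun p => p.2 ∈ N p.1)

theorem stmt13 (N N' : Fin 8 → Finset (Fin 8))
    (hA : ∀ x, 3 ≤ (N x).card)
    (hB : ∀ y : Fin 8, 3 ≤ (Finset.univ.filter (fun x => y ∈ N x)).card)
    (hA' : ∀ x, 3 ≤ (N' x).card)
    (hB' : ∀ y : Fin 8, 3 ≤ (Finset.univ.filter (fun x => y ∈ N' x)).card)
    (X : Finset (Fin 8)) (hX : X.card = 5) (hNX : (X.biUnion N).card = 3)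
    (M₁ M₂ : Finset (Fin 8 × Fin 8))
    (hM₁ : IsMatchingSet M₁) (hM₂ : IsMatchingSet M₂)
    (hH' : edgeFinset' N' = (edgeFinset' N ∪ M₁) \ M₂)
    (hmatch : ∃ x₁ x₂ y₁ y₂ : Fin 8, x₁ ∈ X ∧ x₂ ∈ X ∧ x₁ ≠ x₂ ∧
      y₁ ∉ X.biUnion N ∧ y₂ ∉ X.biUnion N ∧ y₁ ≠ y₂ ∧
      y₁ ∈ N' x₁ ∧ y₂ ∈ N' x₂) :
    ∃ f : Fin 8 ≃ Fin 8, ∀ x, f x ∈ N' x := by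
  classical
  obtain ⟨x₁, x₂, y₁, y₂, hx₁X, hx₂X, hx12, hy₁Y, hy₂Y, hy12, hy₁N, hy₂N⟩ := hmatch
  set Y := X.biUnion N with hYdef
  -- membership characterization of N'
  have hmem : ∀ x y : Fin 8, y ∈ N' x ↔ ((y ∈ N x ∨ (x, y) ∈ M₁) ∧ (x, y) ∉ M₂) := by
    intro x y
    have h := Finset.ext_iff.mp hH' (x, y)
    simpa [edgeFinset', Finset.mem_sdiff, Finset.mem_union] using h
  -- all of X has neighborhood exactly Y
  have hXeq : ∀ x ∈ X, N x = Y := by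
    intro x hx
    exact Finset.eq_of_subset_of_card_le (Finset.subset_biUnion_of_mem N hx)
      (by rw [hNX]; exact hA x)
  have hXc : Xᶜ.card = 3 := by
    rw [Finset.card_compl, hX]; rfl
  have hYc : Yᶜ.card = 5 := by
    rw [Finset.card_compl, hNX]; rfl
  -- every vertex outside X is adjacent to everything outside Y
  have hcompl : ∀ x ∉ X, ∀ y ∉ Y, y ∈ N x := by
    intro x hx y hy
    have hsub : Finset.univ.filter (fun x => y ∈ N x) ⊆ Xᶜ := by
      intro z hz
      simp only [Finset.mem_filter] at hz
      simp only [Finset.mem_compl]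
      intro hzX
      exact hy (Finset.mem_biUnion.mpr ⟨z, hzX, hz.2⟩)
    have heq : Finset.univ.filter (fun x => y ∈ N x) = Xᶜ :=
      Finset.eq_of_subset_of_card_le hsub (by rw [hXc]; exact hB y)
    have : x ∈ Xᶜ := Finset.mem_compl.mpr hx
    rw [← heq] at this
    exact (Finset.mem_filter.mp this).2
  -- M₂ removes at most one edge per row
  have hrow : ∀ (x : Fin 8) (s : Finset (Fin 8)),
      (s.filter (fun y => (x, y) ∈ M₂)).card ≤ 1 := by
    intro x s
    apply Finset.card_le_one.mpr
    intro a ha b hb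
    simp only [Finset.mem_filter] at ha hb
    have := hM₂ (x, a) ha.2 (x, b) hb.2 (Or.inl rfl)
    exact congrArg Prod.snd this
  -- lower bound: each x ∈ X keeps at least 2 neighbors in Y
  have cardY2 : ∀ x ∈ X, 2 ≤ (N' x ∩ Y).card := by
    intro x hx
    have hsub : Y.filter (fun y => (x, y) ∉ M₂) ⊆ N' x ∩ Y := by
      intro y hy
      simp only [Finset.mem_filter] at hy
      refine Finset.mem_inter.mpr ⟨(hmem x y).mpr ⟨Or.inl ?_, hy.2⟩, hy.1⟩
      rw [hXeq x hx]; exact hy.1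
    have h1 := hrow x Y
    have h2 := Finset.card_filter_add_card_filter_not
      (s := Y) (p := fun y => (x, y) ∈ M₂)
    have h3 := Finset.card_le_card hsub
    omega
  -- lower bound: each u ∉ X keeps at least 4 neighbors in Yᶜ
  have cardYc4 : ∀ u ∉ X, 4 ≤ (N' u ∩ Yᶜ).card := by
    intro u hu
    have hsub : Yᶜ.filter (fun y => (u, y) ∉ M₂) ⊆ N' u ∩ Yᶜ := by
      intro y hy
      simp only [Finset.mem_filter, Finset.mem_compl] at hy
      exact Finset.mem_inter.mpr ⟨(hmem u y).mpr ⟨Or.inl (hcompl u hu y hy.1), hy.2⟩,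
        Finset.mem_compl.mpr hy.1⟩
    have h1 := hrow u Yᶜ
    have h2 := Finset.card_filter_add_card_filter_not
      (s := Yᶜ) (p := fun y => (u, y) ∈ M₂)
    have h3 := Finset.card_le_card hsub
    omega
  -- two distinct vertices of X together cover Y
  have Ycov : ∀ x ∈ X, ∀ x' ∈ X, x ≠ x' → Y ⊆ N' x ∪ N' x' := by
    intro x hx x' hx' hne y hy
    by_cases h1 : (x, y) ∈ M₂
    · by_cases h2 : (x', y) ∈ M₂
      · exact absurd (congrArg Prod.fst (hM₂ (x, y) h1 (x', y) h2 (Or.inr rfl))) hne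
      · refine Finset.mem_union_right _ ((hmem x' y).mpr ⟨Or.inl ?_, h2⟩)
        rw [hXeq x' hx']; exact hy
    · refine Finset.mem_union_left _ ((hmem x y).mpr ⟨Or.inl ?_, h1⟩)
      rw [hXeq x hx]; exact hy
  -- two distinct vertices outside X together cover Yᶜ
  have Yccov : ∀ u ∉ X, ∀ v ∉ X, u ≠ v → Yᶜ ⊆ N' u ∪ N' v := by
    intro u hu v hv hne y hy
    have hyY : y ∉ Y := Finset.mem_compl.mp hy
    by_cases h1 : (u, y) ∈ M₂
    · by_cases h2 : (v, y) ∈ M₂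
      · exact absurd (congrArg Prod.fst (hM₂ (u, y) h1 (v, y) h2 (Or.inr rfl))) hne
      · exact Finset.mem_union_right _ ((hmem v y).mpr ⟨Or.inl (hcompl v hv y hyY), h2⟩)
    · exact Finset.mem_union_left _ ((hmem u y).mpr ⟨Or.inl (hcompl u hu y hyY), h1⟩)
  -- Hall's condition
  have hall : ∀ S : Finset (Fin 8), S.card ≤ (S.biUnion N').card := by
    intro S
    by_cases hs3 : S.card ≤ 3
    · rcases S.eq_empty_or_nonempty with rfl | ⟨x, hx⟩
      · simp
      · have h1 : N' x ⊆ S.biUnion N' := Finset.subset_biUnion_of_mem N' hx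
        have h2 := Finset.card_le_card h1
        have := hA' x
        omega
    · push_neg at hs3
      set T := S.biUnion N' with hT
      have hsplit : (T ∩ Y).card + (T \ Y).card = T.card := Finset.card_inter_add_card_sdiff T Y
      have hble : (S \ X).card ≤ 3 := by
        rw [← hXc]
        exact Finset.card_le_card (fun z hz => Finset.mem_compl.mpr (Finset.mem_sdiff.mp hz).2)
      have hab : (S ∩ X).card + (S \ X).card = S.card := Finset.card_inter_add_card_sdiff S X
      have hale : (S ∩ X).card ≤ 5 := by
        rw [← hX]; exact Finset.card_le_card Finset.inter_subset_right
      -- helper: when S∩X has ≥ 2 elements, Y ⊆ T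
    
      have hYfull : 2 ≤ (S ∩ X).card → 3 ≤ (T ∩ Y).card := by
        intro h2
        obtain ⟨x, hx, x', hx', hne⟩ := Finset.one_lt_card.mp h2
        have hxS := Finset.mem_inter.mp hx
        have hx'S := Finset.mem_inter.mp hx'
        have hcov : Y ⊆ T ∩ Y := by
          intro y hy
          refine Finset.mem_inter.mpr ⟨?_, hy⟩
          rcases Finset.mem_union.mp (Ycov x hxS.2 x' hx'S.2 hne hy) with h | h
          · exact Finset.mem_biUnion.mpr ⟨x, hxS.1, h⟩
          · exact Finset.mem_biUnion.mpr ⟨x', hx'S.1, h⟩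
        calc 3 = Y.card := hNX.symm
          _ ≤ _ := Finset.card_le_card hcov
      rcases Nat.lt_or_ge (S \ X).card 2 with hb | hb
      · -- at most one vertex of S outside X, so S ∩ X is big
        have ha2 : 2 ≤ (S ∩ X).card := by omega
        have hY3 := hYfull ha2
        rcases Nat.eq_zero_or_pos (S \ X).card with hb0 | hb1
        · -- S ⊆ X
          have hSX : S ⊆ X := by
            intro z hz
            by_contra hzX
            exact absurd (Finset.card_eq_zero.mp hb0 ▸ Finset.mem_sdiff.mpr ⟨hz, hzX⟩)
              (by simp)
          rcases Nat.lt_or_ge S.card 5 with hs5 | hs5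
          · -- S.card = 4 : one of x₁, x₂ is in S
            have hone : x₁ ∈ S ∨ x₂ ∈ S := by
              by_contra hcon
              push_neg at hcon
              have hsub : S ⊆ X \ {x₁, x₂} := by
                intro z hz
                refine Finset.mem_sdiff.mpr ⟨hSX hz, ?_⟩
                simp only [Finset.mem_insert, Finset.mem_singleton]
                rintro (rfl | rfl)
                · exact hcon.1 hz
                · exact hcon.2 hz
              have hcard : (X \ {x₁, x₂}).card = 3 := by
                rw [Finset.card_sdiff_of_subset (by
                  intro z hz
                  simp only [Finset.mem_insert, Finset.mem_singleton] at hz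
                  rcases hz with rfl | rfl
                  · exact hx₁X
                  · exact hx₂X), hX]
                simp [Finset.card_insert_of_notMem, hx12]
              have := Finset.card_le_card hsub
              omega
            have h1 : 1 ≤ (T \ Y).card := by
              rcases hone with h | h
              · refine Finset.card_pos.mpr ⟨y₁, Finset.mem_sdiff.mpr
                  ⟨Finset.mem_biUnion.mpr ⟨x₁, h, hy₁N⟩, hy₁Y⟩⟩
              · refine Finset.card_pos.mpr ⟨y₂, Finset.mem_sdiff.mpr
                  ⟨Finset.mem_biUnion.mpr ⟨x₂, h, hy₂N⟩, hy₂Y⟩⟩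
            omega
          · -- S = X, both y₁ y₂ appear
            have hSeq : S = X := Finset.eq_of_subset_of_card_le hSX (by omega)
            have hsub : ({y₁, y₂} : Finset (Fin 8)) ⊆ T \ Y := by
              intro y hy
              simp only [Finset.mem_insert, Finset.mem_singleton] at hy
              rcases hy with rfl | rfl
              · exact Finset.mem_sdiff.mpr
                  ⟨Finset.mem_biUnion.mpr ⟨x₁, hSeq ▸ hx₁X, hy₁N⟩, hy₁Y⟩
              · exact Finset.mem_sdiff.mpr
                  ⟨Finset.mem_biUnion.mpr ⟨x₂, hSeq ▸ hx₂X, hy₂N⟩, hy₂Y⟩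
            have h2 : 2 ≤ (T \ Y).card := by
              calc 2 = ({y₁, y₂} : Finset (Fin 8)).card := by
                    rw [Finset.card_insert_of_notMem (by simpa using hy12)]; rfl
                _ ≤ _ := Finset.card_le_card hsub
            have : S.card ≤ 5 := by rw [hSeq, hX]
            omega
        · -- exactly one vertex u ∈ S outside X
          obtain ⟨u, hu⟩ := Finset.card_pos.mp hb1
          have huS := Finset.mem_sdiff.mp hu
          have h4 : 4 ≤ (T \ Y).card := by
            have hsub : N' u ∩ Yᶜ ⊆ T \ Y := by
              intro y hy
              have := Finset.mem_inter.mp hy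
              exact Finset.mem_sdiff.mpr ⟨Finset.mem_biUnion.mpr ⟨u, huS.1, this.1⟩,
                Finset.mem_compl.mp this.2⟩
            exact le_trans (cardYc4 u huS.2) (Finset.card_le_card hsub)
          omega
      · -- at least two vertices of S outside X, Yᶜ fully covered
        obtain ⟨u, hu, v, hv, hne⟩ := Finset.one_lt_card.mp hb
        have huS := Finset.mem_sdiff.mp hu
        have hvS := Finset.mem_sdiff.mp hv
        have h5 : 5 ≤ (T \ Y).card := by
          have hsub : Yᶜ ⊆ T \ Y := by
            intro y hy
            refine Finset.mem_sdiff.mpr ⟨?_, Finset.mem_compl.mp hy⟩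
            rcases Finset.mem_union.mp (Yccov u huS.2 v hvS.2 hne hy) with h | h
            · exact Finset.mem_biUnion.mpr ⟨u, huS.1, h⟩
            · exact Finset.mem_biUnion.mpr ⟨v, hvS.1, h⟩
          calc 5 = Yᶜ.card := hYc.symm
            _ ≤ _ := Finset.card_le_card hsub
        rcases Nat.lt_or_ge (S ∩ X).card 2 with ha | ha
        · omega
        · have := hYfull ha
          have h8 : S.card ≤ 8 := by
            calc S.card ≤ (Finset.univ : Finset (Fin 8)).card := Finset.card_le_card (Finset.subset_univ S)
              _ = 8 := by simp
          omega
  obtain ⟨f, hfinj, hf⟩ := (Finset.all_card_le_biUnion_card_iff_existsInjective' N').mp hall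
  have hbij : Function.Bijective f := (Finite.injective_iff_bijective).mp hfinj
  exact ⟨Equiv.ofBijective f hbij, hf⟩
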